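/- Perturbation bound: Let P̄ and P̄_p = P̄ + δP̄ be columnwise-substochastic tensors, v and v_p = v + δv stochastic vectors, and α with ς = (2k−3)α(1−α)^{−(k−2)/(k−1)} < 1. If y, y_p ∈ Δ solve (e^Ty)^{k-2}y − αP̄y^{k-1} = v and (e^Ty_p)^{k-2}y_p − αP̄_p y_p^{k-1} = v_p respectively, then ‖y_p − y‖_1 ≤ [(2k−3)/((k−1)(1−ς))] ( (α/(1−α)) ‖R(δP̄)‖_1 + ‖δv‖_1 ). -/

import Mathlib

/-!
Write `φ(x) = (eᵀx)^(k-2) x`. Summing an equation over `i` gives `(eᵀy)^(k-1) = 1 + α eᵀ(P̄ y^(k-1)) ≥ 1`,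
and on `{eᵀx ≥ 1}` the map `φ` has a Lipschitz inverse with constant `(2k-3)/(k-1)` in the 1-norm.
Subtracting the two equations,
`φ(y_p) - φ(y) = δv + α (R(δP̄) y_p^{⊗(k-1)} + R(P̄) (y_p^{⊗(k-1)} - y^{⊗(k-1)}))`.
On `Δ` the first tensor term has 1-norm at most `‖R(δP̄)‖₁ / (1-α)`, and the Kronecker power is
Lipschitz with constant `(k-1) M^(k-2)`, `M = (1-α)^(-1/(k-1))`, so the second is at most
`(k-1) M^(k-2) ‖y_p - y‖₁`. Hence `‖y_p - y‖₁ ≤ (2k-3)/(k-1) (E + α (k-1) M^(k-2) ‖y_p - y‖₁)`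
with `E = α/(1-α) ‖R(δP̄)‖₁ + ‖δv‖₁`, and as `(2k-3)/(k-1) · α (k-1) M^(k-2) = ς < 1` the last term
is absorbed.
-/

open Finset Real

noncomputable def contr {n m : ℕ} (P : Fin n → (Fin m → Fin n) → ℝ) (y : Fin n → ℝ) : Fin n → ℝ :=
  fun i => ∑ j : Fin m → Fin n, P i j * ∏ s, y (j s)

open scoped Matrix

def kronPow {ι : Type*} (m : ℕ) (y : ι → ℝ) : (Fin m → ι) → ℝ := fun j => ∏ s, y (j s)

def sumPowMul {ι : Type*} [Fintype ι] (m : ℕ) (x : ι → ℝ) : ι → ℝ := fun i => (∑ l, x l) ^ m * x i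

section KroneckerPower

variable {ι : Type*}

theorem kronPow_nonneg {m : ℕ} {y : ι → ℝ} (hy : ∀ i, 0 ≤ y i) (j : Fin m → ι) :
    0 ≤ kronPow m y j :=
  prod_nonneg fun s _ => hy (j s)

theorem kronPow_cons (m : ℕ) (y : ι → ℝ) (i : ι) (j : Fin m → ι) :
    kronPow (m + 1) y (Fin.cons i j) = y i * kronPow m y j := by
  simp [kronPow, Fin.prod_univ_succ]

theorem sum_fin_succ_pi [Fintype ι] {M : Type*} [AddCommMonoid M] (m : ℕ)
    (f : (Fin (m + 1) → ι) → M) :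
    ∑ j, f j = ∑ i, ∑ j : Fin m → ι, f (Fin.cons i j) := by
  rw [← (Fin.consEquiv fun _ => ι).sum_comp, Fintype.sum_prod_type]
  rfl

theorem sum_kronPow [Fintype ι] (m : ℕ) (y : ι → ℝ) : ∑ j, kronPow m y j = (∑ i, y i) ^ m := by
  classical
  rw [← Fin.prod_const, Fintype.prod_sum]
  rfl

theorem sum_abs_kronPow_sub_le [Fintype ι] {m : ℕ} {a b : ι → ℝ} {M : ℝ} (ha : ∀ i, 0 ≤ a i)
    (hb : ∀ i, 0 ≤ b i) (haM : ∑ i, a i ≤ M) (hbM : ∑ i, b i ≤ M) :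
    ∑ j, |kronPow m a j - kronPow m b j| ≤ m * M ^ (m - 1) * ∑ i, |a i - b i| := by
  have hM : 0 ≤ M := (sum_nonneg fun i _ => hb i).trans hbM
  have hc : 0 ≤ ∑ i, |a i - b i| := sum_nonneg fun i _ => abs_nonneg _
  induction m with
  | zero => simp [kronPow]
  | succ m ih =>
    have hA : ∑ j, kronPow m a j ≤ M ^ m := by
      rw [sum_kronPow]; exact pow_le_pow_left₀ (sum_nonneg fun i _ => ha i) haM m
    -- `a i A - b i B = (a i - b i) A + b i (A - B)`
    have hstep : ∀ i j, |a i * kronPow m a j - b i * kronPow m b j| ≤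
        |a i - b i| * kronPow m a j + b i * |kronPow m a j - kronPow m b j| := fun i j => by
      calc _ = |(a i - b i) * kronPow m a j + b i * (kronPow m a j - kronPow m b j)| := by ring_nf
        _ ≤ _ := by
          refine (abs_add_le _ _).trans_eq ?_
          rw [abs_mul, abs_mul, abs_of_nonneg (kronPow_nonneg ha j), abs_of_nonneg (hb i)]
    calc ∑ j, |kronPow (m + 1) a j - kronPow (m + 1) b j|
        = ∑ i, ∑ j, |a i * kronPow m a j - b i * kronPow m b j| := by
          simp only [sum_fin_succ_pi m, kronPow_cons]
      _ ≤ ∑ i, ∑ j, (|a i - b i| * kronPow m a j + b i * |kronPow m a j - kronPow m b j|) :=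
          sum_le_sum fun i _ => sum_le_sum fun j _ => hstep i j
      _ = (∑ i, |a i - b i|) * ∑ j, kronPow m a j
            + (∑ i, b i) * ∑ j, |kronPow m a j - kronPow m b j| := by
          simp only [sum_add_distrib, ← mul_sum, ← sum_mul]
      _ ≤ (∑ i, |a i - b i|) * M ^ m + M * (m * M ^ (m - 1) * ∑ i, |a i - b i|) := by
          gcongr
      _ = (m + 1 : ℕ) * M ^ (m + 1 - 1) * ∑ i, |a i - b i| := by
          rcases m with _ | m
          · simp
          · simp only [Nat.add_sub_cancel]; push_cast; ring

end KroneckerPower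

theorem succ_mul_mul_pow_le {s t : ℝ} (m : ℕ) (ht : 0 ≤ t) (hts : t ≤ s) :
    (m + 1) * t * s ^ m ≤ m * s ^ (m + 1) + t ^ (m + 1) := by
  rcases hts.eq_or_lt with rfl | hlt
  · ring_nf; rfl
  have hs : 0 < s := ht.trans_lt hlt
  -- Bernoulli's inequality for `(t / s) ^ (m + 1) = (1 + (t / s - 1)) ^ (m + 1)`
  have h := one_add_mul_le_pow (a := t / s - 1) (by linarith [div_nonneg ht hs.le]) (m + 1)
  rw [add_sub_cancel, div_pow, le_div_iff₀ (by positivity)] at h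
  have hexp : (1 + ((m + 1 : ℕ) : ℝ) * (t / s - 1)) * s ^ (m + 1)
      = (m + 1) * t * s ^ m - m * s ^ (m + 1) := by
    field_simp; push_cast; ring
  linarith

section SumPowMul

variable {ι : Type*} [Fintype ι]

theorem sum_abs_sub_le_of_sum_le {m : ℕ} {x y : ι → ℝ} (hy : ∀ i, 0 ≤ y i)
    (hx1 : 1 ≤ ∑ i, x i) (hyx : ∑ i, y i ≤ ∑ i, x i) :
    ∑ i, |x i - y i| ≤
      (2 * m + 1) / (m + 1) * ∑ i, |sumPowMul m x i - sumPowMul m y i| := by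
  set s := ∑ i, x i
  set t := ∑ i, y i
  set c := ∑ i, |x i - y i|
  set D := ∑ i, |sumPowMul m x i - sumPowMul m y i|
  have hφx : ∀ i, sumPowMul m x i = s ^ m * x i := fun i => rfl
  have hφy : ∀ i, sumPowMul m y i = t ^ m * y i := fun i => rfl
  have ht : 0 ≤ t := sum_nonneg fun i _ => hy i
  have hc : 0 ≤ c := sum_nonneg fun i _ => abs_nonneg _
  have hQP : t ^ m ≤ s ^ m := pow_le_pow_left₀ ht hyx m
  have hP1 : 1 ≤ s ^ m := one_le_pow₀ hx1
  have hmass : s ^ (m + 1) - t ^ (m + 1) ≤ D := calc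
    s ^ (m + 1) - t ^ (m + 1) = ∑ i, (sumPowMul m x i - sumPowMul m y i) := by
      simp only [hφx, hφy, sum_sub_distrib, ← mul_sum, pow_succ]; rfl
    _ ≤ D := sum_le_sum fun i _ => le_abs_self _
  have hsplit : s ^ m * c ≤ D + (s ^ m - t ^ m) * t := calc
    s ^ m * c = ∑ i, |(sumPowMul m x i - sumPowMul m y i) - (s ^ m - t ^ m) * y i| := by
      rw [mul_sum]
      refine sum_congr rfl fun i _ => ?_
      rw [hφx, hφy, ← abs_of_nonneg (zero_le_one.trans hP1), ← abs_mul,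
        abs_of_nonneg (zero_le_one.trans hP1)]
      ring_nf
    _ ≤ ∑ i, (|sumPowMul m x i - sumPowMul m y i| + (s ^ m - t ^ m) * y i) := by
      refine sum_le_sum fun i _ => (abs_sub _ _).trans_eq ?_
      rw [abs_of_nonneg (mul_nonneg (sub_nonneg.2 hQP) (hy i))]
    _ = D + (s ^ m - t ^ m) * t := by rw [sum_add_distrib, ← mul_sum]
  have hdefect : (m + 1) * ((s ^ m - t ^ m) * t) ≤ m * D := by
    have := mul_le_mul_of_nonneg_left hmass (Nat.cast_nonneg (α := ℝ) m)
    nlinarith [succ_mul_mul_pow_le m ht hyx, pow_succ t m]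
  have hc_le : c ≤ D + (s ^ m - t ^ m) * t := (le_mul_of_one_le_left hc hP1).trans hsplit
  rw [div_mul_eq_mul_div, le_div_iff₀ (by positivity)]
  nlinarith [mul_le_mul_of_nonneg_left hc_le (by positivity : (0 : ℝ) ≤ m + 1)]

theorem sum_abs_sub_le_of_one_le_sum {m : ℕ} {x y : ι → ℝ} (hx : ∀ i, 0 ≤ x i)
    (hy : ∀ i, 0 ≤ y i) (hx1 : 1 ≤ ∑ i, x i) (hy1 : 1 ≤ ∑ i, y i) :
    ∑ i, |x i - y i| ≤
      (2 * m + 1) / (m + 1) * ∑ i, |sumPowMul m x i - sumPowMul m y i| := by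
  rcases le_total (∑ i, y i) (∑ i, x i) with h | h
  · exact sum_abs_sub_le_of_sum_le hy hx1 h
  · simpa only [abs_sub_comm] using sum_abs_sub_le_of_sum_le hx hy1 h

end SumPowMul

theorem sum_abs_mulVec_le {ι κ : Type*} [Fintype ι] [Fintype κ] {A : Matrix ι κ ℝ} {C : ℝ}
    (hA : ∀ j, ∑ i, |A i j| ≤ C) (u : κ → ℝ) : ∑ i, |(A *ᵥ u) i| ≤ C * ∑ j, |u j| := calc
  ∑ i, |(A *ᵥ u) i| ≤ ∑ i, ∑ j, |A i j| * |u j| :=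
    sum_le_sum fun i _ => (abs_sum_le_sum_abs _ _).trans_eq (by simp only [abs_mul])
  _ = ∑ j, (∑ i, |A i j|) * |u j| := by rw [sum_comm]; simp only [sum_mul]
  _ ≤ ∑ j, C * |u j| := sum_le_sum fun j _ => by gcongr; exact hA j
  _ = C * ∑ j, |u j| := (mul_sum _ _ _).symm

section Contraction

variable {n m : ℕ}

/-- `Matrix.of P` is the mode-1 unfolding `R(P)`, so this is `P y^m = R(P) y^{⊗m}`. -/
theorem contr_eq_mulVec (P : Fin n → (Fin m → Fin n) → ℝ) (y : Fin n → ℝ) :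
    contr P y = Matrix.of P *ᵥ kronPow m y :=
  rfl

theorem contr_nonneg {P : Fin n → (Fin m → Fin n) → ℝ} {y : Fin n → ℝ} (hP : ∀ i j, 0 ≤ P i j)
    (hy : ∀ i, 0 ≤ y i) (i : Fin n) : 0 ≤ contr P y i :=
  sum_nonneg fun j _ => mul_nonneg (hP i j) (kronPow_nonneg hy j)

theorem one_le_sum_of_eq {k : ℕ} (hk : 2 ≤ k) {P : Fin n → (Fin (k - 1) → Fin n) → ℝ}
    {z w : Fin n → ℝ} {α : ℝ} (hα : 0 ≤ α) (hP : ∀ i j, 0 ≤ P i j) (hz : ∀ i, 0 ≤ z i)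
    (hw : ∑ i, w i = 1) (heq : ∀ i, sumPowMul (k - 2) z i - α * contr P z i = w i) :
    1 ≤ ∑ i, z i := by
  have hmass : (∑ i, z i) ^ (k - 1) = 1 + α * ∑ i, contr P z i := by
    rw [← hw, ← sum_congr rfl fun i _ => heq i, sum_sub_distrib, ← mul_sum]
    simp only [sumPowMul, ← mul_sum, ← pow_succ, show k - 2 + 1 = k - 1 by omega]
    ring
  have hcontr : 0 ≤ α * ∑ i, contr P z i :=
    mul_nonneg hα (sum_nonneg fun i _ => contr_nonneg hP hz i)
  rw [← one_le_pow_iff_of_nonneg (sum_nonneg fun i _ => hz i) (by omega : k - 1 ≠ 0), hmass]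
  linarith

theorem sum_abs_sub_le_of_residual {P δP : Fin n → (Fin m → Fin n) → ℝ}
    {f fp v δv y yp : Fin n → ℝ} {α K M : ℝ} (hP0 : ∀ i j, 0 ≤ P i j) (hPs : ∀ j, ∑ i, P i j ≤ 1)
    (hK : ∀ j, ∑ i, |δP i j| ≤ K) (hα : 0 ≤ α) (hy0 : ∀ i, 0 ≤ y i) (hyp0 : ∀ i, 0 ≤ yp i)
    (hyM : ∑ i, y i ≤ M) (hypM : ∑ i, yp i ≤ M)
    (heq : ∀ i, f i - α * contr P y i = v i)
    (heqp : ∀ i, fp i - α * contr (fun i j => P i j + δP i j) yp i = v i + δv i) :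
    ∑ i, |fp i - f i| ≤
      ∑ i, |δv i| + α * (K * (∑ i, yp i) ^ m) + α * (m * M ^ (m - 1) * ∑ i, |yp i - y i|) := by
  set dP := Matrix.of δP *ᵥ kronPow m yp
  set dK := Matrix.of P *ᵥ (kronPow m yp - kronPow m y)
  have hcontr : contr (fun i j => P i j + δP i j) yp - contr P y = dP + dK := by
    rw [contr_eq_mulVec, contr_eq_mulVec]
    change (Matrix.of P + Matrix.of δP) *ᵥ _ - _ = _ + Matrix.of P *ᵥ (kronPow m yp - kronPow m y)
    rw [Matrix.add_mulVec, Matrix.mulVec_sub]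
    abel
  have hdiff : ∀ i, fp i - f i = δv i + α * dP i + α * dK i := fun i => by
    have hi := congrFun hcontr i
    simp only [Pi.add_apply, Pi.sub_apply] at hi
    linear_combination heqp i - heq i + α * hi
  have hdP : ∑ i, |dP i| ≤ K * (∑ i, yp i) ^ m := by
    refine (sum_abs_mulVec_le hK _).trans_eq ?_
    simp only [abs_of_nonneg (kronPow_nonneg hyp0 _), sum_kronPow]
  have hdK : ∑ i, |dK i| ≤ m * M ^ (m - 1) * ∑ i, |yp i - y i| := by
    have hPs' : ∀ j, ∑ i, |Matrix.of P i j| ≤ 1 := fun j => by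
      simpa only [Matrix.of_apply, abs_of_nonneg (hP0 _ j)] using hPs j
    refine (sum_abs_mulVec_le hPs' _).trans ?_
    rw [one_mul]
    exact sum_abs_kronPow_sub_le hyp0 hy0 hypM hyM
  calc ∑ i, |fp i - f i| ≤ ∑ i, (|δv i| + α * |dP i| + α * |dK i|) := by
        refine sum_le_sum fun i _ => ?_
        have habs : ∀ a, |α * a| = α * |a| := fun a => by rw [abs_mul, abs_of_nonneg hα]
        rw [hdiff, ← habs, ← habs]
        exact (abs_add_le _ _).trans (add_le_add (abs_add_le _ _) le_rfl)
    _ = ∑ i, |δv i| + α * ∑ i, |dP i| + α * ∑ i, |dK i| := by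
        simp only [sum_add_distrib, mul_sum]
    _ ≤ _ := by gcongr

end Contraction

theorem le_div_one_sub_mul_of_le_mul_add {c E L q : ℝ} (hLq : L * q < 1)
    (hc : c ≤ L * (E + q * c)) : c ≤ L / (1 - L * q) * E := by
  rw [div_mul_eq_mul_div, le_div_iff₀ (by linarith)]
  linarith

theorem rpow_neg_one_div_pow {a : ℝ} (ha : 0 ≤ a) (r : ℝ) (j : ℕ) :
    (a ^ (-1 / r)) ^ j = a ^ (-(j : ℝ) / r) := by
  rw [← Real.rpow_mul_natCast ha]
  ring_nf

theorem pow_le_inv_of_le_rpow {s a : ℝ} {m : ℕ} (hm : m ≠ 0) (hs : 0 ≤ s) (ha : 0 ≤ a)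
    (h : s ≤ a ^ (-1 / (m : ℝ))) : s ^ m ≤ a⁻¹ := calc
  s ^ m ≤ (a ^ (-1 / (m : ℝ))) ^ m := pow_le_pow_left₀ hs h m
  _ = a⁻¹ := by
    rw [rpow_neg_one_div_pow ha, neg_div, div_self (by exact_mod_cast hm), Real.rpow_neg_one]

theorem mlppr_perturbation_general (n k : ℕ) (hk : 2 ≤ k)
    (Pb δP : Fin n → (Fin (k-1) → Fin n) → ℝ)
    (hP0 : ∀ i j, 0 ≤ Pb i j) (hPs : ∀ j, ∑ i, Pb i j ≤ 1)
    (hPp0 : ∀ i j, 0 ≤ Pb i j + δP i j)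
    (v δv : Fin n → ℝ) (hv1 : ∑ i, v i = 1)
    (hvp1 : ∑ i, (v i + δv i) = 1)
    (α : ℝ) (hα0 : 0 ≤ α) (hα1 : α < 1)
    (hς : (2*(k:ℝ)-3) * α * (1 - α) ^ (-((k:ℝ)-2)/((k:ℝ)-1)) < 1)
    (y yp : Fin n → ℝ) (hy0 : ∀ i, 0 ≤ y i) (hyΔ : ∑ i, y i ≤ (1 - α) ^ (-(1:ℝ)/((k:ℝ)-1)))
    (hyp0 : ∀ i, 0 ≤ yp i) (hypΔ : ∑ i, yp i ≤ (1 - α) ^ (-(1:ℝ)/((k:ℝ)-1)))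
    (heq : ∀ i, (∑ l, y l) ^ (k-2) * y i - α * contr Pb y i = v i)
    (heqp : ∀ i, (∑ l, yp l) ^ (k-2) * yp i -
      α * contr (fun i j => Pb i j + δP i j) yp i = v i + δv i) :
    ∑ i, |yp i - y i| ≤
      (2*(k:ℝ)-3) / (((k:ℝ)-1) * (1 - ((2*(k:ℝ)-3) * α * (1 - α) ^ (-((k:ℝ)-2)/((k:ℝ)-1))))) *
        (α/(1-α) * (⨆ j : Fin (k-1) → Fin n, ∑ i, |δP i j|) + ∑ i, |δv i|) := by
  have h1α : 0 ≤ 1 - α := by linarith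
  have hk1 : ((k - 1 : ℕ) : ℝ) = k - 1 := by rw [Nat.cast_sub (by omega)]; norm_num
  set K := ⨆ j : Fin (k-1) → Fin n, ∑ i, |δP i j|
  have hK : ∀ j, ∑ i, |δP i j| ≤ K := fun j =>
    le_ciSup (f := fun j => ∑ i, |δP i j|) (Set.finite_range _).bddAbove j
  have hK0 : 0 ≤ K := Real.iSup_nonneg fun j => sum_nonneg fun i _ => abs_nonneg _
  have hlip := sum_abs_sub_le_of_one_le_sum (m := k - 2) hyp0 hy0
    (one_le_sum_of_eq hk hα0 hPp0 hyp0 hvp1 heqp) (one_le_sum_of_eq hk hα0 hP0 hy0 hv1 heq)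
  rw [show (2 * ((k - 2 : ℕ) : ℝ) + 1) / ((k - 2 : ℕ) + 1) = (2 * k - 3) / (k - 1) by
    rw [Nat.cast_sub hk]; ring_nf] at hlip
  have hres := sum_abs_sub_le_of_residual (f := sumPowMul (k - 2) y)
    (fp := sumPowMul (k - 2) yp) hP0 hPs hK hα0 hy0 hyp0 hyΔ hypΔ heq heqp
  rw [rpow_neg_one_div_pow h1α, hk1, Nat.cast_sub (by omega), hk1, Nat.cast_one,
    show (k : ℝ) - 1 - 1 = k - 2 by ring] at hres
  have hmass : (∑ i, yp i) ^ (k - 1) ≤ (1 - α)⁻¹ :=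
    pow_le_inv_of_le_rpow (by omega) (sum_nonneg fun i _ => hyp0 i) h1α (hk1 ▸ hypΔ)
  set W := (1 - α) ^ (-((k:ℝ)-2)/((k:ℝ)-1))
  have hk2 : (2:ℝ) ≤ k := by exact_mod_cast hk
  have hLq : (2 * k - 3) / (k - 1) * (α * ((k - 1) * W)) = (2 * k - 3) * α * W := by
    have : (k : ℝ) - 1 ≠ 0 := by linarith
    field_simp
  have hD : ∑ i, |sumPowMul (k - 2) yp i - sumPowMul (k - 2) y i|
      ≤ α / (1 - α) * K + ∑ i, |δv i| + α * ((k - 1) * W) * ∑ i, |yp i - y i| := by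
    have := mul_le_mul_of_nonneg_left (mul_le_mul_of_nonneg_left hmass hK0) hα0
    have hE : α * (K * (1 - α)⁻¹) = α / (1 - α) * K := by ring
    linarith
  have hbound := le_div_one_sub_mul_of_le_mul_add (hLq ▸ hς)
    (hlip.trans (mul_le_mul_of_nonneg_left hD (div_nonneg (by linarith) (by linarith))))
  rwa [hLq, div_div] at hbound

theorem mlppr_perturbation (n k : ℕ) (hn : 0 < n) (hk : 2 ≤ k)
    (Pb δP : Fin n → (Fin (k-1) → Fin n) → ℝ)
    (hP0 : ∀ i j, 0 ≤ Pb i j) (hPs : ∀ j, ∑ i, Pb i j ≤ 1)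
    (hPp0 : ∀ i j, 0 ≤ Pb i j + δP i j) (hPps : ∀ j, ∑ i, (Pb i j + δP i j) ≤ 1)
    (v δv : Fin n → ℝ) (hv0 : ∀ i, 0 ≤ v i) (hv1 : ∑ i, v i = 1)
    (hvp0 : ∀ i, 0 ≤ v i + δv i) (hvp1 : ∑ i, (v i + δv i) = 1)
    (α : ℝ) (hα0 : 0 ≤ α) (hα1 : α < 1)
    (hς : (2*(k:ℝ)-3) * α * (1 - α) ^ (-((k:ℝ)-2)/((k:ℝ)-1)) < 1)
    (y yp : Fin n → ℝ) (hy0 : ∀ i, 0 ≤ y i) (hyΔ : ∑ i, y i ≤ (1 - α) ^ (-(1:ℝ)/((k:ℝ)-1)))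
    (hyp0 : ∀ i, 0 ≤ yp i) (hypΔ : ∑ i, yp i ≤ (1 - α) ^ (-(1:ℝ)/((k:ℝ)-1)))
    (heq : ∀ i, (∑ l, y l) ^ (k-2) * y i - α * contr Pb y i = v i)
    (heqp : ∀ i, (∑ l, yp l) ^ (k-2) * yp i -
      α * contr (fun i j => Pb i j + δP i j) yp i = v i + δv i) :
    ∑ i, |yp i - y i| ≤
      (2*(k:ℝ)-3) / (((k:ℝ)-1) * (1 - ((2*(k:ℝ)-3) * α * (1 - α) ^ (-((k:ℝ)-2)/((k:ℝ)-1))))) *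
        (α/(1-α) * (⨆ j : Fin (k-1) → Fin n, ∑ i, |δP i j|) + ∑ i, |δv i|) :=
  mlppr_perturbation_general n k hk Pb δP hP0 hPs hPp0 v δv hv1 hvp1 α hα0 hα1 hς y yp hy0 hyΔ hyp0
    hypΔ heq heqp
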